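/- arXiv:1704.01858 — 5 statements merged into one kernel-verified Lean document; each statement's English description precedes it below -/
import Mathlib

section
/- If a dataset X is separable with respect to a ground-truth clustering C* (every within-cluster distance is strictly smaller than every between-cluster distance) and a binary cluster tree T over X contains no masked nodes, then T has dendrogram purity 1. -/
open scoped Classical

inductive CTree (α : Type*) where
  | leaf (x : α) : CTree α
  | node (l r : CTree α) : CTree α

namespace CTree

variable {α : Type*}

/-- The set of data points (descendant leaves) of a node. -/
noncomputable def lvs : CTree α → Finset α
  | leaf x => {x}
  | node l r => lvs l ∪ lvs r

theorem lvs_nonempty (t : CTree α) : t.lvs.Nonempty := by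
  induction t with
  | leaf x => exact ⟨x, by simp [lvs]⟩
  | node l r ihl ihr => exact ihl.mono (by simp [lvs])

/-- `Sub s t` : `s` is a subtree (node) of `t`. -/
inductive Sub : CTree α → CTree α → Prop
  | refl (t : CTree α) : Sub t t
  | left {s l r : CTree α} : Sub s l → Sub s (node l r)
  | right {s l r : CTree α} : Sub s r → Sub s (node l r)

/-- Least common ancestor (as a subtree) of two data points. -/
noncomputable def lca : CTree α → α → α → CTree α
  | leaf a, _, _ => leaf a
  | node l r, x, y =>
      if x ∈ lvs l ∧ y ∈ lvs l then lca l x y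
      else if x ∈ lvs r ∧ y ∈ lvs r then lca r x y
      else node l r

/-- Dendrogram purity 1: for every same-cluster pair, all leaves below their
least common ancestor belong to that cluster. -/
def PurityOne (C : α → ℕ) (t : CTree α) : Prop :=
  ∀ x ∈ t.lvs, ∀ y ∈ t.lvs, x ≠ y → C x = C y → ∀ z ∈ (t.lca x y).lvs, C z = C x

/-- A dataset `X` is separable w.r.t. a ground-truth clustering `C`:
every within-cluster distance is strictly smaller than every between-cluster distance. -/
def Separable [MetricSpace α] (X : Finset α) (C : α → ℕ) : Prop :=
  ∀ x ∈ X, ∀ y ∈ X, ∀ x' ∈ X, ∀ y' ∈ X,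
    x ≠ y → C x = C y → C x' ≠ C y' → dist x y < dist x' y'

/-- A node `v` with sibling `v'` and aunt `a` is masked if some `x ∈ lvs v` is farther
from some point of `v'` than from some point of `a`
(i.e. `max_{y ∈ lvs v'} ‖x-y‖ > min_{z ∈ lvs a} ‖x-z‖`). -/
def Masked [MetricSpace α] (v v' a : CTree α) : Prop :=
  ∃ x ∈ v.lvs,
    (a.lvs.inf' (lvs_nonempty a) fun z => dist x z) <
      (v'.lvs.sup' (lvs_nonempty v') fun y => dist x y)

end CTree

abbrev Euc (d : ℕ) := EuclideanSpace ℝ (Fin d)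

namespace CTree

variable {α : Type*}

theorem sub_trans {a b c : CTree α} (h1 : Sub a b) (h2 : Sub b c) : Sub a c := by
  induction h2 with
  | refl => exact h1
  | left h ih => exact Sub.left ih
  | right h ih => exact Sub.right ih

theorem lvs_subset {s t : CTree α} (h : Sub s t) : s.lvs ⊆ t.lvs := by
  induction h with
  | refl => exact subset_rfl
  | left h ih => exact ih.trans (by simp [lvs])
  | right h ih => exact ih.trans (by simp [lvs])

theorem lca_sub (t : CTree α) (x y : α) : Sub (lca t x y) t := by
  induction t with
  | leaf a => exact Sub.refl _
  | node l r ihl ihr =>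
    simp only [lca]
    split_ifs with h1 h2
    · exact Sub.left ihl
    · exact Sub.right ihr
    · exact Sub.refl _

theorem lca_split {t : CTree α} {x y : α} (hx : x ∈ t.lvs) (hy : y ∈ t.lvs) (hne : x ≠ y) :
    ∃ u v, lca t x y = node u v ∧ ((x ∈ lvs u ∧ y ∈ lvs v) ∨ (x ∈ lvs v ∧ y ∈ lvs u)) := by
  induction t with
  | leaf a =>
    simp [lvs] at hx hy
    exact absurd (hx.trans hy.symm) hne
  | node l r ihl ihr =>
    simp only [lca]
    split_ifs with h1 h2
    · exact ihl h1.1 h1.2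
    · exact ihr h2.1 h2.2
    · refine ⟨l, r, rfl, ?_⟩
      simp only [lvs, Finset.mem_union] at hx hy
      rcases hx with hxl | hxr
      · rcases hy with hyl | hyr
        · exact absurd ⟨hxl, hyl⟩ h1
        · exact Or.inl ⟨hxl, hyr⟩
      · rcases hy with hyl | hyr
        · exact Or.inr ⟨hxr, hyl⟩
        · exact absurd ⟨hxr, hyr⟩ h2

/-- The invariant propagated up the tree: `u` is a node one of whose children
contains `y`, and the farthest point of the other child is at distance at least `D`. -/
def Bprop [MetricSpace α] (y : α) (D : ℝ) (u : CTree α) : Prop :=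
  ∃ v v', (u = node v v' ∨ u = node v' v) ∧ y ∈ lvs v ∧
    D ≤ v'.lvs.sup' (lvs_nonempty v') (fun w => dist y w)

theorem up [MetricSpace α] {T : CTree α}
    (hnomask : ∀ v v' a p : CTree α,
      (p = node v v' ∨ p = node v' v) →
      (Sub (node p a) T ∨ Sub (node a p) T) →
      ¬ Masked v v' a)
    (y : α) (D : ℝ) :
    ∀ r : CTree α, Sub r T → ∀ u, Sub u r → Bprop y D u → Bprop y D r := by
  intro r
  induction r with
  | leaf a =>
    intro _ u hu hB
    cases hu
    exact hB
  | node c1 c2 ih1 ih2 =>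
    intro hrT u hu hB
    cases hu with
    | refl => exact hB
    | left h =>
      have hB1 : Bprop y D c1 := ih1 (sub_trans (Sub.left (Sub.refl c1)) hrT) u h hB
      obtain ⟨v, v', hdisj, hyv, hsup⟩ := hB1
      have hnm := hnomask v v' c2 c1 hdisj (Or.inl hrT)
      rw [Masked] at hnm
      push_neg at hnm
      have h2 := hnm y hyv
      obtain ⟨w, hw⟩ := lvs_nonempty c2
      refine ⟨c1, c2, Or.inl rfl, ?_, ?_⟩
      · rcases hdisj with h | h <;> subst h <;> simp [lvs, hyv]
      · calc D ≤ _ := hsup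
          _ ≤ c2.lvs.inf' (lvs_nonempty c2) (fun z => dist y z) := h2
          _ ≤ dist y w := Finset.inf'_le _ hw
          _ ≤ _ := Finset.le_sup' _ hw
    | right h =>
      have hB1 : Bprop y D c2 := ih2 (sub_trans (Sub.right (Sub.refl c2)) hrT) u h hB
      obtain ⟨v, v', hdisj, hyv, hsup⟩ := hB1
      have hnm := hnomask v v' c1 c2 hdisj (Or.inr hrT)
      rw [Masked] at hnm
      push_neg at hnm
      have h2 := hnm y hyv
      obtain ⟨w, hw⟩ := lvs_nonempty c1
      refine ⟨c2, c1, Or.inr rfl, ?_, ?_⟩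
      · rcases hdisj with h | h <;> subst h <;> simp [lvs, hyv]
      · calc D ≤ _ := hsup
          _ ≤ c1.lvs.inf' (lvs_nonempty c1) (fun z => dist y z) := h2
          _ ≤ dist y w := Finset.inf'_le _ hw
          _ ≤ _ := Finset.le_sup' _ hw

theorem side [MetricSpace α] {T : CTree α} {C : α → ℕ}
    (hsep : Separable T.lvs C)
    (hnomask : ∀ v v' a p : CTree α,
      (p = node v v' ∨ p = node v' v) →
      (Sub (node p a) T ∨ Sub (node a p) T) →
      ¬ Masked v v' a)
    {l r : CTree α} (hlr : Sub (node l r) T ∨ Sub (node r l) T)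
    {x y z : α} (hx : x ∈ lvs l) (hy : y ∈ lvs r) (hz : z ∈ lvs r)
    (hxy : C x = C y) (hzy : C z ≠ C y) : False := by
  have hyz : y ≠ z := fun h => hzy (congrArg C h.symm)
  have hrT : Sub r T := by
    rcases hlr with h | h
    · exact sub_trans (Sub.right (Sub.refl r)) h
    · exact sub_trans (Sub.left (Sub.refl r)) h
  have hyT : y ∈ T.lvs := lvs_subset hrT hy
  have hzT : z ∈ T.lvs := lvs_subset hrT hz
  have hxT : x ∈ T.lvs := by
    rcases hlr with h | h
    · exact lvs_subset (sub_trans (Sub.left (Sub.refl l)) h) hx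
    · exact lvs_subset (sub_trans (Sub.right (Sub.refl l)) h) hx
  set D := dist y z with hD
  -- initial invariant at the lca of y and z inside r
  obtain ⟨u, v, heq, hsplit⟩ := lca_split hy hz hyz
  have hBq : Bprop y D (lca r y z) := by
    rcases hsplit with ⟨hyu, hzv⟩ | ⟨hyv, hzu⟩
    · exact ⟨u, v, Or.inl heq, hyu, Finset.le_sup' (fun w => dist y w) hzv⟩
    · exact ⟨v, u, Or.inr heq, hyv, Finset.le_sup' (fun w => dist y w) hzu⟩
  have hBr : Bprop y D r := up hnomask y D r hrT _ (lca_sub r y z) hBq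
  obtain ⟨v1, v2, hdisj, hyv1, hsup⟩ := hBr
  have hnm := hnomask v1 v2 l r hdisj hlr.symm
  apply hnm
  refine ⟨y, hyv1, ?_⟩
  have hinf : l.lvs.inf' (lvs_nonempty l) (fun w => dist y w) ≤ dist y x :=
    Finset.inf'_le _ hx
  have hlt : dist y x < D := by
    by_cases hxey : x = y
    · subst hxey
      simp only [dist_self]
      rw [hD]
      exact dist_pos.mpr hyz
    · exact hsep y hyT x hxT y hyT z hzT (Ne.symm hxey) hxy.symm (Ne.symm hzy)
  exact lt_of_le_of_lt hinf (lt_of_lt_of_le hlt hsup)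

theorem main_aux [MetricSpace α] {T : CTree α} {C : α → ℕ}
    (hsep : Separable T.lvs C)
    (hnomask : ∀ v v' a p : CTree α,
      (p = node v v' ∨ p = node v' v) →
      (Sub (node p a) T ∨ Sub (node a p) T) →
      ¬ Masked v v' a) :
    ∀ s : CTree α, Sub s T → ∀ x ∈ s.lvs, ∀ y ∈ s.lvs, x ≠ y → C x = C y →
      ∀ z ∈ (lca s x y).lvs, C z = C x := by
  intro s
  induction s with
  | leaf a =>
    intro _ x hx y hy hne hC z hz
    simp only [lca, lvs, Finset.mem_singleton] at hx hz
    rw [hz, ← hx]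
  | node l r ihl ihr =>
    intro hsT x hx y hy hne hC z hz
    simp only [lca] at hz
    split_ifs at hz with h1 h2
    · exact ihl (sub_trans (Sub.left (Sub.refl l)) hsT) x h1.1 y h1.2 hne hC z hz
    · exact ihr (sub_trans (Sub.right (Sub.refl r)) hsT) x h2.1 y h2.2 hne hC z hz
    · by_contra hCz
      simp only [lvs, Finset.mem_union] at hx hy hz
      have hsplit : (x ∈ lvs l ∧ y ∈ lvs r) ∨ (x ∈ lvs r ∧ y ∈ lvs l) := by
        rcases hx with hxl | hxr
        · rcases hy with hyl | hyr
          · exact absurd ⟨hxl, hyl⟩ h1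
          · exact Or.inl ⟨hxl, hyr⟩
        · rcases hy with hyl | hyr
          · exact Or.inr ⟨hxr, hyl⟩
          · exact absurd ⟨hxr, hyr⟩ h2
      rcases hsplit with ⟨hxl, hyr⟩ | ⟨hxr, hyl⟩
      · rcases hz with hzl | hzr
        · -- pair (x, z) inside l, aunt r contains y
          exact side hsep hnomask (Or.inr hsT) hyr hxl hzl hC.symm hCz
        · -- pair (y, z) inside r, aunt l contains x
          exact side hsep hnomask (Or.inl hsT) hxl hyr hzr
            hC (fun h => hCz (h.trans hC.symm))
      · rcases hz with hzl | hzr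
        · -- pair (y, z) inside l, aunt r contains x
          exact side hsep hnomask (Or.inr hsT) hxr hyl hzl
            hC (fun h => hCz (h.trans hC.symm))
        · -- pair (x, z) inside r, aunt l contains y
          exact side hsep hnomask (Or.inl hsT) hyl hxr hzr hC.symm hCz

end CTree

open CTree in
/-- If a dataset `X` (the leaves of `T`) is separable w.r.t. a ground-truth
clustering `C` and the binary cluster tree `T` over `X` contains no masked nodes,
then `T` has dendrogram purity 1. -/
theorem separable_no_masked_purity_one {d : ℕ} (C : Euc d → ℕ) (T : CTree (Euc d))
    (hsep : Separable T.lvs C)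
    (hnomask : ∀ v v' a p : CTree (Euc d),
      (p = CTree.node v v' ∨ p = CTree.node v' v) →
      (Sub (CTree.node p a) T ∨ Sub (CTree.node a p) T) →
      ¬ Masked v v' a) :
    PurityOne C T := by
  intro x hx y hy hne hC z hz
  exact CTree.main_aux hsep hnomask T (Sub.refl T) x hx y hy hne hC z hz
end

section
/- There exists a dataset in ℝ (1-dimensional) that is separable with respect to a ground-truth clustering into two clusters, together with an arrival order, such that the greedy online tree-building algorithm (insert each point as a sibling of its nearest-neighbor leaf) produces a cluster tree with dendrogram purity at most 7/8. -/
open scoped Classical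

namespace CTree

variable {α : Type*} [MetricSpace α]

/-- Minimum distance from a point `x` to the leaves of `t`. -/
noncomputable def minDist (x : α) (t : CTree α) : ℝ :=
  t.lvs.inf' (lvs_nonempty t) fun y => dist x y

/-- Greedy insertion: descend towards the child containing the nearest neighbor of `x`,
and split the nearest-neighbor leaf, making `x` its sibling. -/
noncomputable def insertNear (x : α) : CTree α → CTree α
  | leaf a => node (leaf a) (leaf x)
  | node l r =>
      if minDist x l ≤ minDist x r then node (insertNear x l) r
      else node l (insertNear x r)

/-- The greedy online algorithm applied to the arrival order `x0 :: xs`. -/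
noncomputable def buildGreedy (x0 : α) (xs : List α) : CTree α :=
  xs.foldl (fun t y => insertNear y t) (leaf x0)

end CTree

namespace CTree

variable {α : Type*}

/-- Dendrogram purity of a cluster tree w.r.t. a ground-truth clustering `C`. -/
noncomputable def DP (C : α → ℕ) (t : CTree α) : ℝ :=
  (∑ p ∈ (t.lvs ×ˢ t.lvs).filter fun p => p.1 ≠ p.2 ∧ C p.1 = C p.2,
      (((t.lca p.1 p.2).lvs.filter fun z => C z = C p.1).card : ℝ) /
        ((t.lca p.1 p.2).lvs.card : ℝ)) /
    (((t.lvs ×ˢ t.lvs).filter fun p => p.1 ≠ p.2 ∧ C p.1 = C p.2).card : ℝ)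

end CTree

/-!
Three points suffice. Take `0, 1, 3 ∈ ℝ` with clusters `{0, 1}` and `{3}`: the within-cluster
distance `1` is below both between-cluster distances `2` and `3`. When the points arrive in the
order `0, 1, 3`, the nearest neighbour of `3` is `1`, so the greedy split separates `1` from `0`.
The only same-cluster pair `{0, 1}` then has the root as least common ancestor, and only `2/3`
of the root's leaves lie in that cluster.
-/

namespace CTree

variable {α : Type*}

theorem lca_node_eq_self {l r : CTree α} {x y : α}
    (hl : x ∉ l.lvs ∨ y ∉ l.lvs) (hr : x ∉ r.lvs ∨ y ∉ r.lvs) :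
    (node l r).lca x y = node l r := by
  simp only [lca, not_and_or.mpr hl, not_and_or.mpr hr, if_false]

theorem DP_node_leaf_node_eq_two_thirds {C : α → ℕ} {a b c : α} (hab : a ≠ b) (hac : a ≠ c)
    (hbc : b ≠ c) (hCab : C a = C b) (hCac : C a ≠ C c) :
    DP C (node (leaf a) (node (leaf b) (leaf c))) = 2 / 3 := by
  set t := node (leaf a) (node (leaf b) (leaf c))
  have hlvs : t.lvs = {a, b, c} := by simp only [t, lvs, Finset.insert_eq]
  have hpairs : (({a, b, c} ×ˢ {a, b, c} : Finset (α × α)).filter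
      fun p => p.1 ≠ p.2 ∧ C p.1 = C p.2) = {(a, b), (b, a)} := by
    ext ⟨x, y⟩
    simp only [Finset.mem_filter, Finset.mem_product, Finset.mem_insert,
      Finset.mem_singleton, Prod.mk.injEq]
    grind
  have hlca_ab : t.lca a b = t :=
    lca_node_eq_self (by simp [lvs, hab.symm]) (by simp [lvs, hab, hac])
  have hlca_ba : t.lca b a = t :=
    lca_node_eq_self (by simp [lvs, hab.symm]) (by simp [lvs, hab, hac])
  have hsame : (({a, b, c} : Finset α).filter fun z => C z = C a) = {a, b} := by
    ext z
    simp only [Finset.mem_filter, Finset.mem_insert, Finset.mem_singleton]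
    grind
  rw [DP, hlvs, hpairs, Finset.sum_pair (by simp [hab]), hlca_ab, hlca_ba, hlvs, ← hCab, hsame,
    Finset.card_pair hab, Finset.card_insert_of_notMem (by simp [hab, hac]),
    Finset.card_pair hbc, Finset.card_pair (by simp [hab])]
  norm_num

theorem card_image_triple_eq_two {C : α → ℕ} {a b c : α} (hCab : C a = C b) (hCac : C a ≠ C c) :
    (({a, b, c} : Finset α).image C).card = 2 := by
  rw [Finset.image_insert, Finset.image_insert, Finset.image_singleton, ← hCab,
    Finset.insert_eq_of_mem (by simp), Finset.card_pair hCac]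

variable [MetricSpace α]

theorem separable_insert_pair {C : α → ℕ} {a b c : α} (hCab : C a = C b) (hCac : C a ≠ C c)
    (hac : dist a b < dist a c) (hbc : dist a b < dist b c) :
    Separable {a, b, c} C := by
  intro x hx y hy x' hx' y' hy' hxy hCxy hCxy'
  simp only [Finset.mem_insert, Finset.mem_singleton] at hx hy hx' hy'
  rcases hx with rfl | rfl | rfl <;> rcases hy with rfl | rfl | rfl <;>
    rcases hx' with rfl | rfl | rfl <;> rcases hy' with rfl | rfl | rfl <;>
    grind [dist_comm]

theorem buildGreedy_of_dist_lt {a b c : α} (h : dist c b < dist c a) :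
    buildGreedy a [b, c] = node (leaf a) (node (leaf b) (leaf c)) := by
  simp [buildGreedy, insertNear, minDist, lvs, h.not_ge]

end CTree

open CTree in
/-- there is a separable dataset in `ℝ` with two ground-truth clusters
and an arrival order on which the greedy online algorithm builds a tree of
dendrogram purity at most `7/8`. -/
theorem greedy_dendrogram_purity_at_most_seven_eighths :
    ∃ (x0 : ℝ) (xs : List ℝ) (C : ℝ → ℕ),
      (x0 :: xs).Nodup ∧
      Separable (x0 :: xs).toFinset C ∧
      ((x0 :: xs).toFinset.image C).card = 2 ∧
      DP C (buildGreedy x0 xs) ≤ 7 / 8 := by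
  set C : ℝ → ℕ := fun x => if x < 2 then 0 else 1
  have hC01 : C 0 = C 1 := by norm_num [C]
  have hC03 : C 0 ≠ C 3 := by norm_num [C]
  have hpoints : ([0, 1, 3] : List ℝ).toFinset = {0, 1, 3} := by simp
  refine ⟨0, [1, 3], C, by norm_num, ?_, ?_, ?_⟩
  · rw [hpoints]
    exact separable_insert_pair hC01 hC03 (by norm_num [Real.dist_eq]) (by norm_num [Real.dist_eq])
  · rw [hpoints]
    exact card_image_triple_eq_two hC01 hC03
  · rw [buildGreedy_of_dist_lt (by norm_num [Real.dist_eq]),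
      DP_node_leaf_node_eq_two_thirds (by norm_num) (by norm_num) (by norm_num) hC01 hC03]
    norm_num
end

section
/- Under separability of X w.r.t. C*, hierarchical agglomerative clustering with single linkage never merges two clusters from different ground-truth clusters while some mergeable pair of subsets from the same ground-truth cluster remains; consequently, at the stage when exactly K subsets remain (K the number of ground-truth clusters), those subsets are exactly the ground-truth clusters. -/
open scoped Classical

/-- One merge step of hierarchical agglomerative clustering with linkage `link`:
two distinct current subsets minimizing the linkage over all current pairs are merged. -/
inductive HACStep {α : Type*} (link : Finset α → Finset α → ℝ) :
    Finset (Finset α) → Finset (Finset α) → Prop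
  | merge (P : Finset (Finset α)) (A B : Finset α)
      (hA : A ∈ P) (hB : B ∈ P) (hne : A ≠ B)
      (hmin : ∀ A' ∈ P, ∀ B' ∈ P, A' ≠ B' → link A B ≤ link A' B') :
      HACStep link P (insert (A ∪ B) ((P.erase A).erase B))

/-- Single linkage: minimum pairwise distance between the two subsets. -/
noncomputable def singleLink {α : Type*} [MetricSpace α] (A B : Finset α) : ℝ :=
  sInf (Set.image2 dist (↑A : Set α) (↑B : Set α))

/-- Complete linkage: maximum pairwise distance between the two subsets. -/
noncomputable def completeLink {α : Type*} [MetricSpace α] (A B : Finset α) : ℝ :=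
  sSup (Set.image2 dist (↑A : Set α) (↑B : Set α))

/-- Average linkage: average pairwise distance between the two subsets. -/
noncomputable def averageLink {α : Type*} [MetricSpace α] (A B : Finset α) : ℝ :=
  (∑ a ∈ A, ∑ b ∈ B, dist a b) / ((A.card : ℝ) * (B.card : ℝ))

/-! While more than `K` subsets remain and every subset is cluster-pure, pigeonhole gives two
subsets with the same label; their single linkage is a within-cluster distance, so by
separability the minimizing pair cannot realize a between-cluster distance and must itself
carry one label. A partition of `X` into `K` pure parts is then the ground-truth partition. -/

open Finset

variable {α : Type*}

theorem exists_singleLink_eq_dist [MetricSpace α] {A B : Finset α}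
    (hA : A.Nonempty) (hB : B.Nonempty) :
    ∃ a ∈ A, ∃ b ∈ B, singleLink A B = dist a b := by
  obtain ⟨a, ha, b, hb, h⟩ := (((coe_nonempty.mpr hA).image2 (coe_nonempty.mpr hB)).csInf_mem
    (A.finite_toSet.image2 dist B.finite_toSet) : singleLink A B ∈ _)
  exact ⟨a, ha, b, hb, h.symm⟩

structure IsPartitionOf_s11 (X : Finset α) (P : Finset (Finset α)) : Prop where
  nonempty : ∀ A ∈ P, A.Nonempty
  subset : ∀ A ∈ P, A ⊆ X
  cover : ∀ x ∈ X, ∃ A ∈ P, x ∈ A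
  disjoint : ∀ A ∈ P, ∀ B ∈ P, A ≠ B → Disjoint A B

theorem isPartitionOf_image_singleton [DecidableEq α] (X : Finset α) :
    IsPartitionOf_s11 X (X.image fun x => ({x} : Finset α)) where
  nonempty := by simp
  subset := by simp
  cover x hx := ⟨{x}, mem_image_of_mem _ hx, mem_singleton_self x⟩
  disjoint := by
    simp only [mem_image, forall_exists_index, and_imp, forall_apply_eq_imp_iff₂]
    intro x _ y _ hxy
    exact disjoint_singleton.mpr fun h => hxy (h ▸ rfl)

namespace IsPartitionOf_s11

variable {X : Finset α} {P : Finset (Finset α)} {A B : Finset α}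

theorem merge (hP : IsPartitionOf_s11 X P) (hA : A ∈ P) (hB : B ∈ P) :
    IsPartitionOf_s11 X (insert (A ∪ B) ((P.erase A).erase B)) where
  nonempty S hS := by
    rcases mem_insert.mp hS with rfl | hS
    · exact (hP.nonempty A hA).mono subset_union_left
    · exact hP.nonempty S (mem_of_mem_erase (mem_of_mem_erase hS))
  subset S hS := by
    rcases mem_insert.mp hS with rfl | hS
    · exact union_subset (hP.subset A hA) (hP.subset B hB)
    · exact hP.subset S (mem_of_mem_erase (mem_of_mem_erase hS))
  cover x hx := by
    obtain ⟨S, hS, hxS⟩ := hP.cover x hx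
    by_cases hSA : S = A
    · exact ⟨A ∪ B, mem_insert_self _ _, mem_union_left _ (hSA ▸ hxS)⟩
    by_cases hSB : S = B
    · exact ⟨A ∪ B, mem_insert_self _ _, mem_union_right _ (hSB ▸ hxS)⟩
    exact ⟨S, mem_insert_of_mem (mem_erase.mpr ⟨hSB, mem_erase.mpr ⟨hSA, hS⟩⟩), hxS⟩
  disjoint := by
    have hrest : ∀ U ∈ (P.erase A).erase B, Disjoint (A ∪ B) U := by
      intro U hU
      obtain ⟨hUB, hU⟩ := mem_erase.mp hU
      obtain ⟨hUA, hU⟩ := mem_erase.mp hU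
      exact disjoint_union_left.mpr
        ⟨hP.disjoint A hA U hU (Ne.symm hUA), hP.disjoint B hB U hU (Ne.symm hUB)⟩
    intro S hS T hT hST
    rcases mem_insert.mp hS with rfl | hS <;> rcases mem_insert.mp hT with rfl | hT
    · exact absurd rfl hST
    · exact hrest T hT
    · exact (hrest S hS).symm
    · exact hP.disjoint S (mem_of_mem_erase (mem_of_mem_erase hS))
        T (mem_of_mem_erase (mem_of_mem_erase hT)) hST

theorem card_merge (hP : IsPartitionOf_s11 X P) (hA : A ∈ P) (hB : B ∈ P) (hne : A ≠ B) :
    (insert (A ∪ B) ((P.erase A).erase B)).card + 1 = P.card := by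
  have hunion : A ∪ B ∉ (P.erase A).erase B := by
    intro h
    obtain ⟨hneA, hmem⟩ := mem_erase.mp (mem_of_mem_erase h)
    have hAA : Disjoint A A :=
      (hP.disjoint _ hmem A hA hneA).mono_left subset_union_left
    exact (hP.nonempty A hA).ne_empty (disjoint_self_iff_empty A |>.mp hAA)
  have htwo : 2 ≤ P.card := one_lt_card.mpr ⟨A, hA, B, hB, hne⟩
  rw [card_insert_of_notMem hunion, card_erase_of_mem (mem_erase.mpr ⟨Ne.symm hne, hB⟩),
    card_erase_of_mem hA]
  omega

theorem of_reflTransGen [DecidableEq α] {link : Finset α → Finset α → ℝ}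
    (h : Relation.ReflTransGen (HACStep link) (X.image fun x => ({x} : Finset α)) P) :
    IsPartitionOf_s11 X P := by
  induction h with
  | refl => exact isPartitionOf_image_singleton X
  | tail _ hstep ih =>
    cases hstep with
    | merge A B hA hB _ _ => exact ih.merge hA hB

end IsPartitionOf_s11

def IsPure (C : α → ℕ) (P : Finset (Finset α)) : Prop :=
  ∀ A ∈ P, ∀ a ∈ A, ∀ b ∈ A, C a = C b

theorem sup_eq_of_forall_eq {C : α → ℕ} {A : Finset α} (hA : ∀ a ∈ A, ∀ b ∈ A, C a = C b)
    {a : α} (ha : a ∈ A) : A.sup C = C a :=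
  le_antisymm (Finset.sup_le fun b hb => (hA b hb a ha).le) (le_sup ha)

theorem IsPure.merge {C : α → ℕ} {P : Finset (Finset α)} {A B : Finset α} (hpure : IsPure C P)
    (hAB : ∀ a ∈ A ∪ B, ∀ b ∈ A ∪ B, C a = C b) :
    IsPure C (insert (A ∪ B) ((P.erase A).erase B)) := by
  intro S hS
  rcases mem_insert.mp hS with rfl | hS
  · exact hAB
  · exact hpure S (mem_of_mem_erase (mem_of_mem_erase hS))

namespace IsPartitionOf_s11

variable {X : Finset α} {P : Finset (Finset α)} {C : α → ℕ}

-- `A.sup C` serves as the label of a pure part `A`.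
theorem image_sup_eq (hP : IsPartitionOf_s11 X P) (hpure : IsPure C P) :
    P.image (·.sup C) = X.image C := by
  ext c
  simp only [mem_image]
  constructor
  · rintro ⟨A, hA, rfl⟩
    obtain ⟨a, ha⟩ := hP.nonempty A hA
    exact ⟨a, hP.subset A hA ha, (sup_eq_of_forall_eq (hpure A hA) ha).symm⟩
  · rintro ⟨x, hx, rfl⟩
    obtain ⟨A, hA, hxA⟩ := hP.cover x hx
    exact ⟨A, hA, sup_eq_of_forall_eq (hpure A hA) hxA⟩

theorem exists_ne_same_label (hP : IsPartitionOf_s11 X P) (hpure : IsPure C P)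
    (hcard : (X.image C).card < P.card) :
    ∃ A ∈ P, ∃ B ∈ P, A ≠ B ∧ ∀ a ∈ A, ∀ b ∈ B, C a = C b := by
  rw [← hP.image_sup_eq hpure] at hcard
  obtain ⟨A, hA, B, hB, hne, hlabel⟩ :=
    exists_ne_map_eq_of_card_lt_of_maps_to hcard fun S hS => mem_image_of_mem (·.sup C) hS
  refine ⟨A, hA, B, hB, hne, fun a ha b hb => ?_⟩
  rw [← sup_eq_of_forall_eq (hpure A hA) ha, ← sup_eq_of_forall_eq (hpure B hB) hb]
  exact hlabel

theorem eq_image_filter_of_isPure [DecidableEq α] (hP : IsPartitionOf_s11 X P) (hpure : IsPure C P)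
    (hcard : P.card = (X.image C).card) :
    P = X.image fun x => X.filter fun y => C y = C x := by
  have hinj : Set.InjOn (·.sup C) (P : Set (Finset α)) :=
    card_image_iff.mp (by rw [hP.image_sup_eq hpure, hcard])
  have hpart_eq : ∀ A ∈ P, ∀ a ∈ A, A = X.filter fun y => C y = C a := by
    intro A hA a ha
    ext y
    rw [mem_filter]
    refine ⟨fun hy => ⟨hP.subset A hA hy, hpure A hA y hy a ha⟩, fun ⟨hyX, hy⟩ => ?_⟩
    obtain ⟨B, hB, hyB⟩ := hP.cover y hyX
    have hBA : B = A := hinj hB hA <| by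
      simp only [sup_eq_of_forall_eq (hpure B hB) hyB, sup_eq_of_forall_eq (hpure A hA) ha, hy]
    exact hBA ▸ hyB
  ext S
  rw [mem_image]
  constructor
  · intro hS
    obtain ⟨a, ha⟩ := hP.nonempty S hS
    exact ⟨a, hP.subset S hS ha, (hpart_eq S hS a ha).symm⟩
  · rintro ⟨x, hx, rfl⟩
    obtain ⟨A, hA, hxA⟩ := hP.cover x hx
    exact hpart_eq A hA x hxA ▸ hA

theorem union_pure_of_singleLink_le [MetricSpace α] {A B : Finset α}
    (hsep : CTree.Separable X C) (hP : IsPartitionOf_s11 X P)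
    (hpure : IsPure C P) (hcard : (X.image C).card < P.card) (hA : A ∈ P) (hB : B ∈ P)
    (hmin : ∀ A' ∈ P, ∀ B' ∈ P, A' ≠ B' → singleLink A B ≤ singleLink A' B') :
    ∀ a ∈ A ∪ B, ∀ b ∈ A ∪ B, C a = C b := by
  obtain ⟨A', hA', B', hB', hne', hsame⟩ := hP.exists_ne_same_label hpure hcard
  obtain ⟨a', ha', b', hb', hlink'⟩ :=
    exists_singleLink_eq_dist (hP.nonempty A' hA') (hP.nonempty B' hB')
  obtain ⟨a₀, ha₀, b₀, hb₀, hlink⟩ :=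
    exists_singleLink_eq_dist (hP.nonempty A hA) (hP.nonempty B hB)
  have hab' : a' ≠ b' := fun h =>
    disjoint_left.mp (hP.disjoint A' hA' B' hB' hne') ha' (h ▸ hb')
  have hab₀ : C a₀ = C b₀ := by
    by_contra hdiff
    have hlt := hsep a' (hP.subset A' hA' ha') b' (hP.subset B' hB' hb')
      a₀ (hP.subset A hA ha₀) b₀ (hP.subset B hB hb₀) hab' (hsame a' ha' b' hb') hdiff
    have hle := hmin A' hA' B' hB' hne'
    rw [hlink, hlink'] at hle
    exact hle.not_gt hlt
  have hlabel : ∀ u ∈ A ∪ B, C u = C a₀ := by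
    intro u hu
    rcases mem_union.mp hu with hu | hu
    · exact hpure A hA u hu a₀ ha₀
    · exact (hpure B hB u hu b₀ hb₀).trans hab₀.symm
  intro a ha b hb
  rw [hlabel a ha, hlabel b hb]

end IsPartitionOf_s11

theorem isPure_of_reflTransGen_singleLink [MetricSpace α] [DecidableEq α] {X : Finset α}
    {C : α → ℕ} {P : Finset (Finset α)} (hsep : CTree.Separable X C)
    (h : Relation.ReflTransGen (HACStep singleLink) (X.image fun x => ({x} : Finset α)) P)
    (hK : (X.image C).card ≤ P.card) : IsPure C P := by
  induction h with
  | refl =>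
    simp only [IsPure, mem_image, forall_exists_index, and_imp]
    rintro _ x _ rfl a ha b hb
    rw [mem_singleton.mp ha, mem_singleton.mp hb]
  | @tail Q _ hreach hstep ih =>
    cases hstep with
    | merge A B hA hB hne hmin =>
      have hQ := IsPartitionOf_s11.of_reflTransGen hreach
      have hcard : (X.image C).card < Q.card := by
        have := hQ.card_merge hA hB hne
        omega
      have hpure := ih hcard.le
      exact hpure.merge (hQ.union_pure_of_singleLink_le hsep hpure hcard hA hB hmin)

open CTree in
/-- under separability, hierarchical agglomerative clustering with
single linkage only merges subsets lying in a common ground-truth cluster while more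
than `K` subsets remain, so every reachable partition with at least `K` subsets is
cluster-pure, and the reachable partition with exactly `K` subsets is exactly the
ground-truth clustering. -/
theorem single_linkage_recovers_ground_truth {d : ℕ} (X : Finset (Euc d))
    (C : Euc d → ℕ) (hsep : Separable X C) :
    (∀ P, Relation.ReflTransGen (HACStep (singleLink))
        (X.image fun x => ({x} : Finset (Euc d))) P →
      (X.image C).card ≤ P.card → ∀ A ∈ P, ∀ a ∈ A, ∀ b ∈ A, C a = C b) ∧
    (∀ P, Relation.ReflTransGen (HACStep (singleLink))
        (X.image fun x => ({x} : Finset (Euc d))) P →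
      P.card = (X.image C).card →
      P = X.image fun x => X.filter fun y => C y = C x) :=
  ⟨fun _ h hK => isPure_of_reflTransGen_singleLink hsep h hK,
    fun _ h hcard => (IsPartitionOf_s11.of_reflTransGen h).eq_image_filter_of_isPure
      (isPure_of_reflTransGen_singleLink hsep h hcard.ge) hcard⟩
end

section
/- Under separability of X w.r.t. C*, the ground-truth clustering C* is the unique minimizer of the K-center cost among all partitions of X into K clusters, where K is the number of ground-truth clusters and the cost of a partition is its maximum within-part pairwise distance (diameter): any other K-partition has strictly larger cost. -/
open scoped Classical

/-- A partition of `X` into nonempty, pairwise disjoint parts. -/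
def IsPartitionOf {d : ℕ} (P : Finset (Finset (Euc d))) (X : Finset (Euc d)) : Prop :=
  (∀ A ∈ P, A.Nonempty) ∧ (P : Set (Finset (Euc d))).PairwiseDisjoint id ∧
    P.biUnion id = X

/-- Diameter of a finite set: maximum pairwise distance within it. -/
noncomputable def fdiam {d : ℕ} (A : Finset (Euc d)) : ℝ :=
  sSup (Set.image2 dist (↑A : Set (Euc d)) (↑A : Set (Euc d)))

/-- K-center (diameter) cost of a partition: the maximum part diameter. -/
noncomputable def diamCost {d : ℕ} (P : Finset (Finset (Euc d))) : ℝ :=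
  sSup (↑(P.image fdiam) : Set ℝ)


section AuxKC
variable {d : ℕ}

lemma fdiam_le_aux {A : Finset (Euc d)} {r : ℝ} (hr : 0 ≤ r)
    (h : ∀ a ∈ A, ∀ b ∈ A, dist a b ≤ r) : fdiam A ≤ r := by
  apply Real.sSup_le _ hr
  rintro x ⟨a, ha, b, hb, rfl⟩
  exact h a ha b hb

lemma le_fdiam_aux {A : Finset (Euc d)} {a b : Euc d} (ha : a ∈ A) (hb : b ∈ A) :
    dist a b ≤ fdiam A := by
  apply le_csSup ((Set.Finite.image2 _ A.finite_toSet A.finite_toSet).bddAbove)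
  exact Set.mem_image2_of_mem (by exact_mod_cast ha) (by exact_mod_cast hb)

lemma le_diamCost_aux {P : Finset (Finset (Euc d))} {A : Finset (Euc d)} (hA : A ∈ P) :
    fdiam A ≤ diamCost P := by
  apply le_csSup ((P.image fdiam).finite_toSet.bddAbove)
  exact_mod_cast Finset.mem_image_of_mem fdiam hA

lemma diamCost_le_aux {P : Finset (Finset (Euc d))} {r : ℝ} (hr : 0 ≤ r)
    (h : ∀ A ∈ P, fdiam A ≤ r) : diamCost P ≤ r := by
  apply Real.sSup_le _ hr
  intro x hx
  rw [Finset.mem_coe, Finset.mem_image] at hx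
  obtain ⟨A, hA, rfl⟩ := hx
  exact h A hA

end AuxKC

set_option maxHeartbeats 1000000 in
open CTree in
/-- under separability, the ground-truth clustering is the unique minimizer
of the maximum-diameter (K-center) cost among all partitions of `X` into `K` parts: its
cost is the maximum within-cluster distance `δ_in`, and every other `K`-partition has
strictly larger cost. -/
theorem ground_truth_unique_kcenter_minimizer {d : ℕ} (X : Finset (Euc d))
    (C : Euc d → ℕ) (hsep : Separable X C) (hX : X.Nonempty) :
    diamCost (X.image fun x => X.filter fun y => C y = C x) =
      sSup {r : ℝ | ∃ a ∈ X, ∃ b ∈ X, C a = C b ∧ r = dist a b} ∧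
    ∀ P : Finset (Finset (Euc d)), IsPartitionOf P X →
      P.card = (X.image C).card →
      P ≠ (X.image fun x => X.filter fun y => C y = C x) →
      diamCost (X.image fun x => X.filter fun y => C y = C x) < diamCost P := by
  classical
  obtain ⟨x0, hx0⟩ := hX
  set Pstar := X.image fun x => X.filter fun y => C y = C x with hPstar
  set S : Set ℝ := {r : ℝ | ∃ a ∈ X, ∃ b ∈ X, C a = C b ∧ r = dist a b} with hSdef
  have hSfinite : S.Finite := by
    apply Set.Finite.subset ((X.finite_toSet.prod X.finite_toSet).image fun p => dist p.1 p.2)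
    rintro r ⟨a, ha, b, hb, _, rfl⟩
    exact ⟨(a, b), ⟨ha, hb⟩, rfl⟩
  have hSnon : S.Nonempty := ⟨dist x0 x0, x0, hx0, x0, hx0, rfl, rfl⟩
  have hle_din : ∀ a ∈ X, ∀ b ∈ X, C a = C b → dist a b ≤ sSup S := by
    intro a ha b hb hC
    exact le_csSup hSfinite.bddAbove ⟨a, ha, b, hb, hC, rfl⟩
  have h0 : (0 : ℝ) ≤ sSup S := le_trans dist_nonneg (hle_din x0 hx0 x0 hx0 rfl)
  have hsubX : ∀ x ∈ X, x ∈ (X.filter fun y => C y = C x) := by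
    intro x hx; simp [hx]
  have hcost1 : diamCost Pstar = sSup S := by
    apply le_antisymm
    · apply diamCost_le_aux h0
      intro A hA
      rw [hPstar, Finset.mem_image] at hA
      obtain ⟨x, hx, rfl⟩ := hA
      apply fdiam_le_aux h0
      intro a ha b hb
      rw [Finset.mem_filter] at ha hb
      exact hle_din a ha.1 b hb.1 (ha.2.trans hb.2.symm)
    · have hmemP : ∀ x ∈ X, (X.filter fun y => C y = C x) ∈ Pstar := by
        intro x hx
        rw [hPstar]
        exact Finset.mem_image_of_mem _ hx
      apply Real.sSup_le
      · rintro r ⟨a, ha, b, hb, hC, rfl⟩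
        refine le_trans (le_fdiam_aux (A := X.filter fun y => C y = C a) ?_ ?_)
          (le_diamCost_aux (hmemP a ha))
        · exact hsubX a ha
        · simp [hb, hC.symm]
      · exact le_trans dist_nonneg
          (le_trans (le_fdiam_aux (hsubX x0 hx0) (hsubX x0 hx0))
            (le_diamCost_aux (hmemP x0 hx0)))
  refine ⟨hcost1, ?_⟩
  intro P hP hcard hne
  obtain ⟨hP1, hP2, hP3⟩ := hP
  have hsub : ∀ A ∈ P, A ⊆ X := by
    intro A hA a ha
    rw [← hP3]
    exact Finset.mem_biUnion.2 ⟨A, hA, ha⟩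
  by_cases hpure : ∀ A ∈ P, ∀ a ∈ A, ∀ b ∈ A, C a = C b
  · exfalso
    apply hne
    have hsurj : ∀ c ∈ X.image C, ∃ A, ∃ hA : A ∈ P,
        (fun (A : Finset (Euc d)) (hA : A ∈ P) => C (hP1 A hA).choose) A hA = c := by
      intro c hc
      rw [Finset.mem_image] at hc
      obtain ⟨x, hx, rfl⟩ := hc
      rw [← hP3] at hx
      obtain ⟨A, hA, hxA⟩ := Finset.mem_biUnion.1 hx
      exact ⟨A, hA, hpure A hA _ (hP1 A hA).choose_spec x hxA⟩
    have hinj : ∀ A₁ (h₁ : A₁ ∈ P) A₂ (h₂ : A₂ ∈ P),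
        C (hP1 A₁ h₁).choose = C (hP1 A₂ h₂).choose → A₁ = A₂ := by
      intro A₁ h₁ A₂ h₂ heq
      exact Finset.inj_on_of_surj_on_of_card_le
        (fun (A : Finset (Euc d)) (hA : A ∈ P) => C (hP1 A hA).choose)
        (fun A hA => Finset.mem_image_of_mem C (hsub A hA (hP1 A hA).choose_spec))
        hsurj (le_of_eq hcard) h₁ h₂ heq
    have hparteq : ∀ A, ∀ hA : A ∈ P, ∀ x ∈ A, A = X.filter fun y => C y = C x := by
      intro A hA x hxA
      apply Finset.ext
      intro y
      simp only [Finset.mem_filter]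
      constructor
      · intro hy
        exact ⟨hsub A hA hy, hpure A hA y hy x hxA⟩
      · rintro ⟨hyX, hyC⟩
        rw [← hP3] at hyX
        obtain ⟨B, hB, hyB⟩ := Finset.mem_biUnion.1 hyX
        have hBA : B = A := by
          apply hinj B hB A hA
          calc C (hP1 B hB).choose = C y := hpure B hB _ (hP1 B hB).choose_spec y hyB
            _ = C x := hyC
            _ = C (hP1 A hA).choose := hpure A hA x hxA _ (hP1 A hA).choose_spec
        rwa [← hBA]
    apply Finset.ext
    intro A
    constructor
    · intro hA
      rw [hparteq A hA _ (hP1 A hA).choose_spec, hPstar]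
      exact Finset.mem_image_of_mem _ (hsub A hA (hP1 A hA).choose_spec)
    · intro hA
      rw [hPstar, Finset.mem_image] at hA
      obtain ⟨x, hx, rfl⟩ := hA
      have hx' : x ∈ P.biUnion id := by rw [hP3]; exact hx
      obtain ⟨B, hB, hxB⟩ := Finset.mem_biUnion.1 hx'
      rw [← hparteq B hB x hxB]
      exact hB
  · push_neg at hpure
    obtain ⟨A, hA, a, ha, b, hb, hab⟩ := hpure
    have hdlt : sSup S < dist a b := by
      obtain ⟨x, hx, y, hy, hC, heq⟩ := hSnon.csSup_mem hSfinite
      rw [heq]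
      by_cases hxyeq : x = y
      · subst hxyeq
        simp only [dist_self]
        exact dist_pos.2 fun h => hab (by rw [h])
      · exact hsep x hx y hy a (hsub A hA ha) b (hsub A hA hb) hxyeq hC hab
    rw [hcost1]
    exact lt_of_lt_of_le hdlt (le_trans (le_fdiam_aux ha hb) (le_diamCost_aux hA))
end

section
/- Let T be a binary cluster tree over X with dendrogram purity 1 w.r.t. C*, and let x be a new point belonging to cluster C ∈ C* where C already has at least one point in T. Under separability of X ∪ {x} w.r.t. C*, the nearest neighbor of x among the leaves of T belongs to C; hence greedy nearest-neighbor insertion places x inside the maximal pure subtree T[C] containing exactly the points of C present in T. -/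
open scoped Classical

open CTree in
/-- under separability of the dataset including a new point `x` whose
cluster already has a point in the purity-1 tree `T`, every nearest neighbor of `x` among
the leaves of `T` lies in `x`'s cluster; hence it lies in the maximal pure subtree
consisting exactly of the points of that cluster present in `T`. -/
theorem greedy_insert_lands_in_pure_subtree {d : ℕ} (C : Euc d → ℕ) (T : CTree (Euc d))
    (x : Euc d) (hx : x ∉ T.lvs)
    (hsep : Separable (insert x T.lvs) C)
    (hpure : PurityOne C T)
    (hrep : ∃ y ∈ T.lvs, C y = C x) :
    ∀ y ∈ T.lvs, (∀ w ∈ T.lvs, dist x y ≤ dist x w) →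
      C y = C x ∧
      ∀ s : CTree (Euc d), Sub s T → s.lvs = (T.lvs.filter fun z => C z = C x) →
        y ∈ s.lvs := by
  intro y hy hmin
  obtain ⟨y0, hy0, hCy0⟩ := hrep
  have hxmem : x ∈ insert x T.lvs := Finset.mem_insert_self _ _
  have hCy : C y = C x := by
    by_contra hne
    have hxy0 : x ≠ y0 := fun h => hx (h ▸ hy0)
    have := hsep x hxmem y0 (Finset.mem_insert_of_mem hy0)
      x hxmem y (Finset.mem_insert_of_mem hy) hxy0 hCy0.symm (fun h => hne h.symm)
    exact absurd (hmin y0 hy0) (not_le.mpr this)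
  refine ⟨hCy, fun s _ hs => ?_⟩
  rw [hs, Finset.mem_filter]
  exact ⟨hy, hCy⟩
end
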